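/- Let A ∈ ℝ^{m×m}, B ∈ ℝ^{m×1}, C ∈ ℝ^{1×m}, real scalars α < β, ε > 0. Suppose (P, L, J), with P symmetric positive definite, L ∈ ℝ^{p×m}, J ∈ ℝ^p, satisfy the ε-KYP conditions for (A − αBC, B, C, 1/(β−α)): P(A − αBC) + (A − αBC)ᵀP = −LᵀL − (ε/2)P, PB = Cᵀ − LᵀJ, JᵀJ = 2/(β−α). Let n : ℝ × ℝ → ℝ be continuous and satisfy the sector condition (n(t,y) − αy)·(βy − n(t,y)) ≥ 0 for all t and y. Let x : [0, ∞) → ℝ^m be differentiable with x'(t) = A x(t) − B n(t, C x(t)) for all t ≥ 0. Then (1/2) x(t)ᵀ P x(t) ≤ (1/2) x(0)ᵀ P x(0) · e^{−(ε/2)t} for all t ≥ 0, and consequently x(t) → 0 as t → ∞. -/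

import Mathlib

/-!
Write `y = Cx` and `ν = n(t, y) - α y` for the nonlinearity shifted into the sector `[0, β - α]`,
so that `x' = (A - αBC) x - ν B`. The first two KYP equations turn the derivative of `xᵀPx` into
`-(ε/2) xᵀPx - |Lx - νJ|² + ν² |J|² - 2νy`, and with `|J|² = 2/(β - α)` the sector condition
`ν ((β - α) y - ν) ≥ 0` makes `ν² |J|² - 2νy ≤ 0`. Hence `V' ≤ -(ε/2) V` and Grönwall gives the
exponential bound; since `P` is positive definite, `c |x|² ≤ xᵀPx` for some `c > 0` (the minimum
of the form on the unit sphere), so the decay of `V` forces `x → 0`.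
-/

open Matrix Filter Real

theorem HasDerivAt.dotProduct {𝕜 ι : Type*} [NontriviallyNormedField 𝕜] [Fintype ι]
    {f g : 𝕜 → ι → 𝕜} {f' g' : ι → 𝕜} {t : 𝕜}
    (hf : HasDerivAt f f' t) (hg : HasDerivAt g g' t) :
    HasDerivAt (fun s => f s ⬝ᵥ g s) (f' ⬝ᵥ g t + f t ⬝ᵥ g') t := by
  show HasDerivAt (fun s => ∑ i, f s i * g s i) (∑ i, f' i * g t i + ∑ i, f t i * g' i) t
  rw [← Finset.sum_add_distrib]
  exact HasDerivAt.fun_sum fun i _ => (hasDerivAt_pi.mp hf i).mul (hasDerivAt_pi.mp hg i)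

theorem HasDerivAt.mulVec {𝕜 ι : Type*} [NontriviallyNormedField 𝕜] [Fintype ι]
    (P : Matrix ι ι 𝕜) {f : 𝕜 → ι → 𝕜} {f' : ι → 𝕜} {t : 𝕜}
    (hf : HasDerivAt f f' t) : HasDerivAt (fun s => P *ᵥ f s) (P *ᵥ f') t :=
  hasDerivAt_pi.2 fun i => HasDerivAt.fun_sum fun j _ => (hasDerivAt_pi.mp hf j).const_mul (P i j)

theorem le_mul_exp_of_hasDerivAt_le_mul {V V' : ℝ → ℝ} {K : ℝ}
    (hV : ∀ t, 0 ≤ t → HasDerivAt V (V' t) t) (hV' : ∀ t, 0 ≤ t → V' t ≤ K * V t)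
    {t : ℝ} (ht : 0 ≤ t) : V t ≤ V 0 * exp (K * t) := by
  have h := le_gronwallBound_of_liminf_deriv_right_le (ε := 0) (a := 0) (b := t)
    (fun s hs => (hV s hs.1).continuousAt.continuousWithinAt)
    (fun s hs r hr => by
      simpa [slope_def_field, div_eq_inv_mul] using
        (hV s hs.1).hasDerivWithinAt.liminf_right_slope_le hr)
    le_rfl (fun s hs => by simpa using hV' s hs.1) t ⟨ht, le_rfl⟩
  simpa [gronwallBound_ε0] using h

theorem Matrix.PosDef.exists_pos_mul_norm_sq_le {ι : Type*} [Fintype ι] {P : Matrix ι ι ℝ}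
    (hP : P.PosDef) : ∃ c > 0, ∀ v : ι → ℝ, c * ‖v‖ ^ 2 ≤ v ⬝ᵥ P *ᵥ v := by
  have hq : Continuous fun v : ι → ℝ => v ⬝ᵥ P *ᵥ v := by fun_prop
  obtain ⟨c, hc, hsphere⟩ := (isCompact_sphere (0 : ι → ℝ) 1).exists_forall_le' hq.continuousOn
    (a := 0) fun u hu => hP.dotProduct_mulVec_pos (ne_zero_of_mem_unit_sphere ⟨u, hu⟩)
  refine ⟨c, hc, fun v => ?_⟩
  rcases eq_or_ne v 0 with rfl | hv
  · simp
  have hv' : 0 < ‖v‖ := norm_pos_iff.mpr hv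
  have hu : ‖v‖⁻¹ • v ∈ Metric.sphere (0 : ι → ℝ) 1 := by
    simp [norm_smul, hv'.ne']
  calc c * ‖v‖ ^ 2 ≤ ((‖v‖⁻¹ • v) ⬝ᵥ P *ᵥ (‖v‖⁻¹ • v)) * ‖v‖ ^ 2 := by
        gcongr; exact hsphere _ hu
    _ = v ⬝ᵥ P *ᵥ v := by
        simp only [mulVec_smul, smul_dotProduct, dotProduct_smul, smul_eq_mul]
        field_simp

theorem Matrix.PosDef.tendsto_zero_of_dotProduct_mulVec_le {α ι : Type*} [Fintype ι]
    {P : Matrix ι ι ℝ} (hP : P.PosDef) {l : Filter α} {x : α → ι → ℝ} {g : α → ℝ}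
    (hg : Tendsto g l (nhds 0)) (hle : ∀ᶠ a in l, x a ⬝ᵥ P *ᵥ x a ≤ g a) :
    Tendsto x l (nhds 0) := by
  obtain ⟨c, hc, hcoer⟩ := hP.exists_pos_mul_norm_sq_le
  have hsq : Tendsto (fun a => ‖x a‖ ^ 2) l (nhds 0) := by
    refine squeeze_zero' (.of_forall fun a => sq_nonneg _) ?_ (by simpa using hg.div_const c)
    exact hle.mono fun a ha => (le_div_iff₀' hc).2 ((hcoer _).trans ha)
  exact tendsto_zero_iff_norm_tendsto_zero.2 (by simpa [sqrt_sq (norm_nonneg _)] using hsq.sqrt)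

theorem Matrix.IsSymm.dotProduct_mulVec_comm {R ι : Type*} [CommSemiring R] [Fintype ι]
    {P : Matrix ι ι R} (hP : P.IsSymm) (u w : ι → R) : u ⬝ᵥ P *ᵥ w = w ⬝ᵥ P *ᵥ u := by
  rw [dotProduct_mulVec, ← mulVec_transpose, hP, dotProduct_comm]

theorem kyp_dissipation_eq {R ι κ : Type*} [CommRing R] [Fintype ι] [Fintype κ]
    {A P : Matrix ι ι R} {B C : ι → R} {L : Matrix κ ι R} {J : κ → R} {γ : R}
    (hP : P.IsSymm) (hKYP1 : P * A + Aᵀ * P = -(Lᵀ * L) - γ • P)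
    (hKYP2 : P *ᵥ B = C - Lᵀ *ᵥ J) (v : ι → R) (ν : R) :
    (A *ᵥ v - ν • B) ⬝ᵥ P *ᵥ v + v ⬝ᵥ P *ᵥ (A *ᵥ v - ν • B)
      = -γ * (v ⬝ᵥ P *ᵥ v) - (L *ᵥ v - ν • J) ⬝ᵥ (L *ᵥ v - ν • J)
        + ν ^ 2 * (J ⬝ᵥ J) - 2 * ν * (C ⬝ᵥ v) := by
  have hquad := congrArg (fun M => v ⬝ᵥ M *ᵥ v) hKYP1
  have hPB : v ⬝ᵥ P *ᵥ B = C ⬝ᵥ v - J ⬝ᵥ L *ᵥ v := by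
    rw [hKYP2, dotProduct_sub, dotProduct_mulVec, vecMul_transpose, dotProduct_comm v,
      dotProduct_comm (L *ᵥ v)]
  simp only [add_mulVec, sub_mulVec, neg_mulVec, smul_mulVec, ← mulVec_mulVec,
    dotProduct_add, dotProduct_sub, dotProduct_neg, dotProduct_smul] at hquad
  rw [dotProduct_mulVec v Aᵀ, vecMul_transpose, hP.dotProduct_mulVec_comm (A *ᵥ v),
    dotProduct_mulVec v Lᵀ, vecMul_transpose] at hquad
  rw [hP.dotProduct_mulVec_comm (A *ᵥ v - ν • B)]
  simp only [mulVec_sub, mulVec_smul, dotProduct_sub, dotProduct_smul, sub_dotProduct,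
    smul_dotProduct, smul_eq_mul, hPB, dotProduct_comm (L *ᵥ v) J] at hquad ⊢
  linear_combination hquad

theorem sq_mul_two_div_le_of_sector {α β y N : ℝ} (hαβ : α < β)
    (hsector : 0 ≤ (N - α * y) * (β * y - N)) :
    (N - α * y) ^ 2 * (2 / (β - α)) ≤ 2 * (N - α * y) * y := by
  have hβα : 0 < β - α := sub_pos.mpr hαβ
  have h : (N - α * y) ^ 2 ≤ (β - α) * ((N - α * y) * y) := by nlinarith
  calc (N - α * y) ^ 2 * (2 / (β - α)) ≤ (β - α) * ((N - α * y) * y) * (2 / (β - α)) := by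
        gcongr
    _ = 2 * (N - α * y) * y := by field_simp

theorem lure_dissipation_le {ι κ : Type*} [Fintype ι] [Fintype κ]
    {A P : Matrix ι ι ℝ} {B C : ι → ℝ} {L : Matrix κ ι ℝ} {J : κ → ℝ} {α β γ : ℝ}
    (hαβ : α < β) (hP : P.IsSymm)
    (hKYP1 : P * (A - α • vecMulVec B C) + (A - α • vecMulVec B C)ᵀ * P
      = -(Lᵀ * L) - γ • P)
    (hKYP2 : P *ᵥ B = C - Lᵀ *ᵥ J) (hKYP3 : J ⬝ᵥ J = 2 / (β - α))
    (v : ι → ℝ) {N : ℝ} (hsector : 0 ≤ (N - α * (C ⬝ᵥ v)) * (β * (C ⬝ᵥ v) - N)) :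
    (A *ᵥ v - N • B) ⬝ᵥ P *ᵥ v + v ⬝ᵥ P *ᵥ (A *ᵥ v - N • B) ≤ -γ * (v ⬝ᵥ P *ᵥ v) := by
  have hshift : A *ᵥ v - N • B
      = (A - α • vecMulVec B C) *ᵥ v - (N - α * (C ⬝ᵥ v)) • B := by
    rw [sub_mulVec, smul_mulVec, vecMulVec_mulVec, sub_smul, mul_smul]
    simp only [op_smul_eq_smul, sub_sub_sub_cancel_right]
  have hsquare : 0 ≤ (L *ᵥ v - (N - α * (C ⬝ᵥ v)) • J) ⬝ᵥ (L *ᵥ v - (N - α * (C ⬝ᵥ v)) • J) :=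
    dotProduct_self_star_nonneg _
  rw [hshift, kyp_dissipation_eq hP hKYP1 hKYP2, hKYP3]
  linarith [sq_mul_two_div_le_of_sector hαβ hsector]

theorem circle_criterion_general {m p : ℕ}
    (A : Matrix (Fin m) (Fin m) ℝ) (B : Fin m → ℝ) (C : Fin m → ℝ)
    (α β ε : ℝ) (hαβ : α < β) (hε : 0 < ε)
    (P : Matrix (Fin m) (Fin m) ℝ) (hP : P.PosDef)
    (L : Matrix (Fin p) (Fin m) ℝ) (J : Fin p → ℝ)
    (hKYP1 : P * (A - α • vecMulVec B C) + (A - α • vecMulVec B C)ᵀ * P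
                = -(Lᵀ * L) - (ε / 2) • P)
    (hKYP2 : P.mulVec B = C - Lᵀ.mulVec J)
    (hKYP3 : J ⬝ᵥ J = 2 / (β - α))
    (n : ℝ → ℝ → ℝ)
    (hsector : ∀ t y, 0 ≤ (n t y - α * y) * (β * y - n t y))
    (x : ℝ → Fin m → ℝ)
    (hx : ∀ t, 0 ≤ t → HasDerivAt x (A.mulVec (x t) - n t (C ⬝ᵥ x t) • B) t) :
    (∀ t, 0 ≤ t → (1 / 2) * (x t ⬝ᵥ P.mulVec (x t))
        ≤ (1 / 2) * (x 0 ⬝ᵥ P.mulVec (x 0)) * Real.exp (-(ε / 2) * t)) ∧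
      Tendsto x atTop (nhds 0) := by
  have hPsymm : P.IsSymm := (conjTranspose_eq_transpose_of_trivial P).symm.trans hP.isHermitian
  have hdecay : ∀ t, 0 ≤ t → x t ⬝ᵥ P *ᵥ x t ≤ x 0 ⬝ᵥ P *ᵥ x 0 * exp (-(ε / 2) * t) :=
    fun t ht => le_mul_exp_of_hasDerivAt_le_mul
      (fun s hs => (hx s hs).dotProduct ((hx s hs).mulVec P))
      (fun s _ => lure_dissipation_le hαβ hPsymm hKYP1 hKYP2 hKYP3 (x s) (hsector s _)) ht
  have hexp : Tendsto (fun t => x 0 ⬝ᵥ P *ᵥ x 0 * exp (-(ε / 2) * t)) atTop (nhds 0) := by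
    simpa using ((tendsto_exp_atBot.comp (tendsto_id.const_mul_atTop_of_neg
      (neg_lt_zero.2 (half_pos hε)))).const_mul (x 0 ⬝ᵥ P *ᵥ x 0))
  refine ⟨fun t ht => by linarith [hdecay t ht], ?_⟩
  exact hP.tendsto_zero_of_dotProduct_mulVec_le hexp ((eventually_ge_atTop 0).mono hdecay)

/-- The `M = 0` case of Theorem 1, recovering the standard Circle Criterion:
under the ε-KYP conditions for the shifted realization
`(A - αBC, B, C, 1/(β-α))` and the sector condition
`(n(t,y) - αy)(βy - n(t,y)) ≥ 0`, the Lyapunov function `V = (1/2)xᵀPx` decays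
exponentially along solutions of `x' = A x - B n(t, Cx)`, and `x(t) → 0`. -/
theorem circle_criterion {m p : ℕ}
    (A : Matrix (Fin m) (Fin m) ℝ) (B : Fin m → ℝ) (C : Fin m → ℝ)
    (α β ε : ℝ) (hαβ : α < β) (hε : 0 < ε)
    (P : Matrix (Fin m) (Fin m) ℝ) (hP : P.PosDef)
    (L : Matrix (Fin p) (Fin m) ℝ) (J : Fin p → ℝ)
    (hKYP1 : P * (A - α • vecMulVec B C) + (A - α • vecMulVec B C)ᵀ * P
                = -(Lᵀ * L) - (ε / 2) • P)
    (hKYP2 : P.mulVec B = C - Lᵀ.mulVec J)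
    (hKYP3 : J ⬝ᵥ J = 2 / (β - α))
    (n : ℝ → ℝ → ℝ) (hn : Continuous fun q : ℝ × ℝ => n q.1 q.2)
    (hsector : ∀ t y, 0 ≤ (n t y - α * y) * (β * y - n t y))
    (x : ℝ → Fin m → ℝ)
    (hx : ∀ t, 0 ≤ t → HasDerivAt x (A.mulVec (x t) - n t (C ⬝ᵥ x t) • B) t) :
    (∀ t, 0 ≤ t → (1 / 2) * (x t ⬝ᵥ P.mulVec (x t))
        ≤ (1 / 2) * (x 0 ⬝ᵥ P.mulVec (x 0)) * Real.exp (-(ε / 2) * t)) ∧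
      Tendsto x atTop (nhds 0) :=
  circle_criterion_general A B C α β ε hαβ hε P hP L J hKYP1 hKYP2 hKYP3 n hsector x hx
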